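/- arXiv:1810.07403 — 2 statements merged into one kernel-verified Lean document; each statement's English description precedes it below -/
import Mathlib

section
/- Fix γ > 0, r ≥ 1, and ℓ_i > 1 for 1 ≤ i ≤ r. Then the infimum of K_r((ℓ_i), (η_i); γ) over all (η_i) ∈ (0,∞)^r equals the infimum over the constrained set (η_i) ∈ [1,∞)^r; indeed, for every (η_i) ∈ (0,∞)^r one has K_r((ℓ_i), (η_i); γ) ≥ K_r((ℓ_i), (max(1, η_i)); γ). -/
open Real Matrix

/-- Cosine `c(ℓ;γ)` from spiked covariance asymptotics. -/
noncomputable def cP (γ ℓ : ℝ) : ℝ :=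
  if 1 + Real.sqrt γ < ℓ then Real.sqrt ((1 - γ / (ℓ - 1) ^ 2) / (1 + γ / (ℓ - 1))) else 0

/-- Sine `s(ℓ;γ) = sqrt(1 - c²)`. -/
noncomputable def sP (γ ℓ : ℝ) : ℝ := Real.sqrt (1 - (cP γ ℓ) ^ 2)

/-- The 2×2 block `A(ℓ,η;γ)` of the asymptotic pivot. -/
noncomputable def Amat (γ ℓ η : ℝ) : Matrix (Fin 2) (Fin 2) ℝ :=
  !![(η * (cP γ ℓ) ^ 2 + (sP γ ℓ) ^ 2) / ℓ, (η - 1) * cP γ ℓ * sP γ ℓ / Real.sqrt ℓ;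
     (η - 1) * cP γ ℓ * sP γ ℓ / Real.sqrt ℓ, (cP γ ℓ) ^ 2 + η * (sP γ ℓ) ^ 2]

/-- Largest eigenvalue `ν₊(A(ℓ,η;γ))` (supremum of the real spectrum). -/
noncomputable def nuP (γ ℓ η : ℝ) : ℝ := sSup (spectrum ℝ (Amat γ ℓ η))

/-- Smallest eigenvalue `ν₋(A(ℓ,η;γ))` (infimum of the real spectrum). -/
noncomputable def nuM (γ ℓ η : ℝ) : ℝ := sInf (spectrum ℝ (Amat γ ℓ η))

/-- Threshold `ℓ₁⁺(γ) = 1 + (γ + sqrt(γ² + 8γ))/2`. -/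
noncomputable def ellOnePlus (γ : ℝ) : ℝ := 1 + (γ + Real.sqrt (γ ^ 2 + 8 * γ)) / 2

/-- Optimal single-spike shrinker `η₁*(ℓ;γ)`. -/
noncomputable def eta1star (γ ℓ : ℝ) : ℝ :=
  if ellOnePlus γ < ℓ then ℓ / (1 + γ + 2 * γ / (ℓ - 1)) else 1

/-- Optimal single-spike loss `κ₁*(ℓ;γ)`. -/
noncomputable def kappa1star (γ ℓ : ℝ) : ℝ :=
  nuP γ ℓ (eta1star γ ℓ) / nuM γ ℓ (eta1star γ ℓ)

/-- `a(ℓ;γ) = c²/ℓ + s²`. -/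
noncomputable def aP (γ ℓ : ℝ) : ℝ := (cP γ ℓ) ^ 2 / ℓ + (sP γ ℓ) ^ 2

/-- `b(ℓ;γ) = s²/ℓ + c²`. -/
noncomputable def bP (γ ℓ : ℝ) : ℝ := (sP γ ℓ) ^ 2 / ℓ + (cP γ ℓ) ^ 2

/-- Multi-spike condition-number objective `K_r((ℓᵢ),(ηᵢ);γ)`. -/
noncomputable def Kr (γ : ℝ) {r : ℕ} (ℓ η : Fin r → ℝ) : ℝ :=
  max 1 (⨆ i, nuP γ (ℓ i) (η i)) / min 1 (⨅ i, nuM γ (ℓ i) (η i))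


section Aux

lemma spectrum_fin_two_aux (a b d : ℝ) :
    spectrum ℝ !![a, b; b, d] =
      {(a + d - Real.sqrt ((a - d) ^ 2 + 4 * b ^ 2)) / 2,
       (a + d + Real.sqrt ((a - d) ^ 2 + 4 * b ^ 2)) / 2} := by
  have hD : Real.sqrt ((a - d) ^ 2 + 4 * b ^ 2) ^ 2 = (a - d) ^ 2 + 4 * b ^ 2 :=
    Real.sq_sqrt (by positivity)
  ext x
  rw [spectrum.mem_iff]
  have h1 : (algebraMap ℝ (Matrix (Fin 2) (Fin 2) ℝ) x - !![a,b;b,d]) = !![x-a,-b;-b,x-d] := by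
    ext i j; fin_cases i <;> fin_cases j <;> simp [Matrix.algebraMap_matrix_apply]
  rw [h1, Matrix.isUnit_iff_isUnit_det, isUnit_iff_ne_zero, not_ne_iff, Matrix.det_fin_two_of]
  have key : (x - a) * (x - d) - (-b) * (-b) =
      (x - (a + d - Real.sqrt ((a - d) ^ 2 + 4 * b ^ 2)) / 2) *
      (x - (a + d + Real.sqrt ((a - d) ^ 2 + 4 * b ^ 2)) / 2) := by
    linear_combination (1/4 : ℝ) * hD
  rw [key, mul_eq_zero, sub_eq_zero, sub_eq_zero]
  simp [Set.mem_insert_iff]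

lemma sSup_spectrum_aux (a b d : ℝ) :
    sSup (spectrum ℝ !![a, b; b, d]) =
      (a + d + Real.sqrt ((a - d) ^ 2 + 4 * b ^ 2)) / 2 := by
  rw [spectrum_fin_two_aux, csSup_pair]
  exact sup_eq_right.2 (by linarith [Real.sqrt_nonneg ((a - d) ^ 2 + 4 * b ^ 2)])

lemma sInf_spectrum_aux (a b d : ℝ) :
    sInf (spectrum ℝ !![a, b; b, d]) =
      (a + d - Real.sqrt ((a - d) ^ 2 + 4 * b ^ 2)) / 2 := by
  rw [spectrum_fin_two_aux, csInf_pair]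
  exact inf_eq_left.2 (by linarith [Real.sqrt_nonneg ((a - d) ^ 2 + 4 * b ^ 2)])

lemma cP_sq_le_one {γ ℓ : ℝ} (hγ : 0 ≤ γ) (hℓ : 1 < ℓ) : cP γ ℓ ^ 2 ≤ 1 := by
  unfold cP
  split_ifs with h
  · have h1 : 0 < ℓ - 1 := by linarith
    have h2 : Real.sqrt γ < ℓ - 1 := by linarith
    have h3 : γ < (ℓ - 1) ^ 2 := by
      calc γ = Real.sqrt γ ^ 2 := (Real.sq_sqrt hγ).symm
        _ < (ℓ - 1) ^ 2 := pow_lt_pow_left₀ h2 (Real.sqrt_nonneg γ) (by norm_num)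
    have h4 : γ / (ℓ - 1) ^ 2 < 1 := (div_lt_one (by positivity)).2 h3
    have h5 : (0:ℝ) < 1 + γ / (ℓ - 1) := by positivity
    rw [Real.sq_sqrt (div_nonneg (by linarith) h5.le), div_le_one h5]
    have h6 : 0 ≤ γ / (ℓ - 1) := by positivity
    have h7 : 0 ≤ γ / (ℓ - 1) ^ 2 := by positivity
    linarith
  · norm_num

lemma cs_sq {γ ℓ : ℝ} (hγ : 0 ≤ γ) (hℓ : 1 < ℓ) : cP γ ℓ ^ 2 + sP γ ℓ ^ 2 = 1 := by
  have := cP_sq_le_one hγ hℓ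
  unfold sP
  rw [Real.sq_sqrt (by linarith)]
  ring

lemma Amat_one {γ ℓ : ℝ} (hγ : 0 ≤ γ) (hℓ : 1 < ℓ) : Amat γ ℓ 1 = !![1/ℓ, 0; 0, 1] := by
  have hcs := cs_sq hγ hℓ
  unfold Amat
  have h1 : 1 * cP γ ℓ ^ 2 + sP γ ℓ ^ 2 = 1 := by rw [one_mul]; exact hcs
  have h2 : cP γ ℓ ^ 2 + 1 * sP γ ℓ ^ 2 = 1 := by rw [one_mul]; exact hcs
  rw [h1, h2]
  norm_num

lemma sqrt_diag_aux {ℓ : ℝ} (hℓ : 1 < ℓ) :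
    Real.sqrt ((1/ℓ - 1) ^ 2 + 4 * 0 ^ 2) = 1 - 1/ℓ := by
  rw [show (1/ℓ - 1) ^ 2 + 4 * (0:ℝ) ^ 2 = (1 - 1/ℓ) ^ 2 by ring,
    Real.sqrt_sq (by rw [sub_nonneg, div_le_one (by linarith : (0:ℝ) < ℓ)]; linarith)]

lemma nuP_one {γ ℓ : ℝ} (hγ : 0 ≤ γ) (hℓ : 1 < ℓ) : nuP γ ℓ 1 = 1 := by
  rw [nuP, Amat_one hγ hℓ, sSup_spectrum_aux, sqrt_diag_aux hℓ]; ring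

lemma nuM_one {γ ℓ : ℝ} (hγ : 0 ≤ γ) (hℓ : 1 < ℓ) : nuM γ ℓ 1 = 1/ℓ := by
  rw [nuM, Amat_one hγ hℓ, sInf_spectrum_aux, sqrt_diag_aux hℓ]; ring

lemma nuM_le_A11 (γ ℓ η : ℝ) :
    nuM γ ℓ η ≤ (η * cP γ ℓ ^ 2 + sP γ ℓ ^ 2) / ℓ := by
  rw [nuM, Amat, sInf_spectrum_aux]
  set a := (η * cP γ ℓ ^ 2 + sP γ ℓ ^ 2) / ℓ with ha
  set d := cP γ ℓ ^ 2 + η * sP γ ℓ ^ 2 with hd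
  set b := (η - 1) * cP γ ℓ * sP γ ℓ / Real.sqrt ℓ with hb
  have h1 : |a - d| ≤ Real.sqrt ((a - d) ^ 2 + 4 * b ^ 2) := by
    rw [← Real.sqrt_sq_eq_abs]
    exact Real.sqrt_le_sqrt (by nlinarith [sq_nonneg b])
  have h2 := neg_abs_le (a - d)
  linarith

lemma nuM_pos {γ ℓ η : ℝ} (hγ : 0 ≤ γ) (hℓ : 1 < ℓ) (hη : 0 < η) : 0 < nuM γ ℓ η := by
  have hcs := cs_sq hγ hℓ
  have hc2 : 0 ≤ cP γ ℓ ^ 2 := sq_nonneg _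
  have hs2 : 0 ≤ sP γ ℓ ^ 2 := sq_nonneg _
  have hℓ0 : (0:ℝ) < ℓ := by linarith
  rw [nuM, Amat, sInf_spectrum_aux]
  set a := (η * cP γ ℓ ^ 2 + sP γ ℓ ^ 2) / ℓ with ha
  set d := cP γ ℓ ^ 2 + η * sP γ ℓ ^ 2 with hd
  set b := (η - 1) * cP γ ℓ * sP γ ℓ / Real.sqrt ℓ with hb
  have hnum : 0 < η * cP γ ℓ ^ 2 + sP γ ℓ ^ 2 := by
    rcases le_total η 1 with h | h
    · nlinarith
    · nlinarith
  have hdpos : 0 < d := by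
    rw [hd]
    rcases le_total η 1 with h | h
    · nlinarith
    · nlinarith
  have hapos : 0 < a := div_pos hnum hℓ0
  have hb2 : b ^ 2 = (η - 1) ^ 2 * cP γ ℓ ^ 2 * sP γ ℓ ^ 2 / ℓ := by
    rw [hb, div_pow, Real.sq_sqrt hℓ0.le]; ring
  have hdet : a * d - b ^ 2 = η / ℓ := by
    rw [ha, hd, hb2, div_mul_eq_mul_div, div_sub_div_same,
      div_eq_div_iff (ne_of_gt hℓ0) (ne_of_gt hℓ0)]
    linear_combination ℓ * η * (cP γ ℓ ^ 2 + sP γ ℓ ^ 2 + 1) * hcs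
  have hdetpos : 0 < a * d - b ^ 2 := by rw [hdet]; positivity
  have hDsq : Real.sqrt ((a - d) ^ 2 + 4 * b ^ 2) ^ 2 = (a - d) ^ 2 + 4 * b ^ 2 :=
    Real.sq_sqrt (by positivity)
  have hDnn : 0 ≤ Real.sqrt ((a - d) ^ 2 + 4 * b ^ 2) := Real.sqrt_nonneg _
  nlinarith [hDsq, hDnn, hapos, hdpos, hdetpos]

lemma nuP_clip {γ ℓ η : ℝ} (hγ : 0 ≤ γ) (hℓ : 1 < ℓ) :
    nuP γ ℓ (max 1 η) ≤ max 1 (nuP γ ℓ η) := by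
  rcases le_total 1 η with h | h
  · rw [max_eq_right h]; exact le_max_right _ _
  · rw [max_eq_left h, nuP_one hγ hℓ]; exact le_max_left _ _

lemma nuM_clip {γ ℓ η : ℝ} (hγ : 0 ≤ γ) (hℓ : 1 < ℓ) :
    min 1 (nuM γ ℓ η) ≤ nuM γ ℓ (max 1 η) := by
  rcases le_total 1 η with h | h
  · rw [max_eq_right h]; exact min_le_right _ _
  · rw [max_eq_left h, nuM_one hγ hℓ]
    have hℓ0 : (0:ℝ) < ℓ := by linarith
    have hc2 : 0 ≤ cP γ ℓ ^ 2 := sq_nonneg _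
    have hcs := cs_sq hγ hℓ
    have h1 : (η * cP γ ℓ ^ 2 + sP γ ℓ ^ 2) / ℓ ≤ 1 / ℓ := by
      rw [div_le_div_iff₀ hℓ0 hℓ0]
      nlinarith [mul_nonneg (mul_nonneg (sub_nonneg.2 h) hc2) hℓ0.le]
    exact (min_le_right _ _).trans ((nuM_le_A11 γ ℓ η).trans h1)

end Aux

/-- the unconstrained infimum of the multi-spike objective over
`(0,∞)^r` equals the constrained infimum over `[1,∞)^r`; indeed clipping all
`ηᵢ` up to 1 never increases the objective. -/
theorem stmt12 (γ : ℝ) (hγ : 0 < γ) (r : ℕ) (hr : 1 ≤ r)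
    (ℓ : Fin r → ℝ) (hℓ : ∀ i, 1 < ℓ i) :
    (∀ η : Fin r → ℝ, (∀ i, 0 < η i) →
      Kr γ ℓ (fun i => max 1 (η i)) ≤ Kr γ ℓ η) ∧
    sInf {x : ℝ | ∃ η : Fin r → ℝ, (∀ i, 0 < η i) ∧ x = Kr γ ℓ η}
      = sInf {x : ℝ | ∃ η : Fin r → ℝ, (∀ i, 1 ≤ η i) ∧ x = Kr γ ℓ η} := by
  have hne : Nonempty (Fin r) := ⟨⟨0, hr⟩⟩
  have key : ∀ η : Fin r → ℝ, (∀ i, 0 < η i) →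
      Kr γ ℓ (fun i => max 1 (η i)) ≤ Kr γ ℓ η := by
    intro η hη
    have hDpos : 0 < min 1 (⨅ i, nuM γ (ℓ i) (η i)) := by
      refine lt_min one_pos ?_
      obtain ⟨i₀, hi₀⟩ := Finite.exists_min (fun i => nuM γ (ℓ i) (η i))
      exact lt_of_lt_of_le (nuM_pos hγ.le (hℓ i₀) (hη i₀)) (le_ciInf hi₀)
    have hNum : max 1 (⨆ i, nuP γ (ℓ i) (max 1 (η i))) ≤ max 1 (⨆ i, nuP γ (ℓ i) (η i)) := by
      refine max_le (le_max_left _ _) (ciSup_le fun i => ?_)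
      refine (nuP_clip hγ.le (hℓ i)).trans (max_le (le_max_left _ _) ?_)
      exact le_trans (le_ciSup (f := fun i => nuP γ (ℓ i) (η i)) (Set.Finite.bddAbove (Set.finite_range _)) i) (le_max_right _ _)
    have hDen : min 1 (⨅ i, nuM γ (ℓ i) (η i)) ≤ min 1 (⨅ i, nuM γ (ℓ i) (max 1 (η i))) := by
      refine le_min (min_le_left _ _) (le_ciInf fun i => ?_)
      refine le_trans ?_ (nuM_clip hγ.le (hℓ i))
      exact min_le_min le_rfl (ciInf_le (f := fun i => nuM γ (ℓ i) (η i)) (Set.Finite.bddBelow (Set.finite_range _)) i)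
    have := div_le_div₀ (le_trans zero_le_one (le_max_left _ _)) hNum hDpos hDen
    simpa [Kr] using this
  have hKrpos : ∀ η : Fin r → ℝ, (∀ i, 0 < η i) → 0 ≤ Kr γ ℓ η := by
    intro η hη
    have hDpos : 0 < min 1 (⨅ i, nuM γ (ℓ i) (η i)) := by
      refine lt_min one_pos ?_
      obtain ⟨i₀, hi₀⟩ := Finite.exists_min (fun i => nuM γ (ℓ i) (η i))
      exact lt_of_lt_of_le (nuM_pos hγ.le (hℓ i₀) (hη i₀)) (le_ciInf hi₀)
    exact div_nonneg (le_trans zero_le_one (le_max_left _ _)) hDpos.le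
  refine ⟨key, ?_⟩
  set S0 := {x : ℝ | ∃ η : Fin r → ℝ, (∀ i, 0 < η i) ∧ x = Kr γ ℓ η} with hS0
  set S1 := {x : ℝ | ∃ η : Fin r → ℝ, (∀ i, 1 ≤ η i) ∧ x = Kr γ ℓ η} with hS1
  have hsub : S1 ⊆ S0 := by
    rintro x ⟨η, hη, rfl⟩
    exact ⟨η, fun i => lt_of_lt_of_le one_pos (hη i), rfl⟩
  have hbdd0 : BddBelow S0 := by
    refine ⟨0, ?_⟩
    rintro x ⟨η, hη, rfl⟩
    exact hKrpos η hη
  have hbdd1 : BddBelow S1 := hbdd0.mono hsub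
  have hne1 : S1.Nonempty := ⟨Kr γ ℓ (fun _ => 1), fun _ => 1, fun i => le_rfl, rfl⟩
  have hne0 : S0.Nonempty := hne1.mono hsub
  refine le_antisymm (csInf_le_csInf hbdd0 hne1 hsub) ?_
  refine le_csInf hne0 ?_
  rintro x ⟨η, hη, rfl⟩
  refine le_trans (csInf_le hbdd1 ?_) (key η hη)
  exact ⟨fun i => max 1 (η i), fun i => le_max_left _ _, rfl⟩
end

section
/- Fix γ > 0 and ν₀ > 1, and define η(ℓ, ν₀; γ) = (ν₀ − b(ℓ;γ))/(a(ℓ;γ) − 1/(ℓν₀)) wherever the denominator is nonzero. Then for every ℓ > 1 + √γ (with denominator nonzero) one has the identity η(ℓ, ν₀; γ)/(ℓ·ν₀) = [(ℓ−1)(ν₀−1) + γν₀] / [(ℓ−1)((1+γ)ν₀ − 1) + γ(2ν₀ − 1)]. Moreover, if either γ ≥ 1 and ν₀ > 1, or 0 < γ < 1 and 1 < ν₀ < 1/(1 − √γ), then the function ℓ ↦ [(ℓ−1)(ν₀−1) + γν₀] / [(ℓ−1)((1+γ)ν₀ − 1) + γ(2ν₀ − 1)] is strictly decreasing on (1, ∞);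 in particular ℓ ↦ η(ℓ, ν₀; γ)/ℓ is strictly decreasing on (1 + √γ, ∞). -/
open Real Matrix

lemma cP_sq {γ ℓ : ℝ} (hγ : 0 < γ) (h : 1 + Real.sqrt γ < ℓ) :
    (cP γ ℓ) ^ 2 = (1 - γ / (ℓ - 1) ^ 2) / (1 + γ / (ℓ - 1)) := by
  have hs : 0 < Real.sqrt γ := Real.sqrt_pos.mpr hγ
  have hL : Real.sqrt γ < ℓ - 1 := by linarith
  have hL0 : 0 < ℓ - 1 := hs.trans hL
  have hγL : γ < (ℓ - 1) ^ 2 := by nlinarith [Real.sq_sqrt hγ.le]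
  rw [cP, if_pos h, Real.sq_sqrt]
  apply div_nonneg
  · have : γ / (ℓ - 1) ^ 2 ≤ 1 := by
      rw [div_le_one (by positivity)]; linarith
    linarith
  · positivity

lemma sP_sq {γ ℓ : ℝ} (hγ : 0 < γ) (h : 1 + Real.sqrt γ < ℓ) :
    (sP γ ℓ) ^ 2 = 1 - (cP γ ℓ) ^ 2 := by
  have hs : 0 < Real.sqrt γ := Real.sqrt_pos.mpr hγ
  have hL0 : 0 < ℓ - 1 := by linarith
  rw [sP, Real.sq_sqrt]
  rw [cP_sq hγ h]
  have hd : (0:ℝ) < 1 + γ / (ℓ - 1) := by positivity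
  have : (1 - γ / (ℓ - 1) ^ 2) / (1 + γ / (ℓ - 1)) ≤ 1 := by
    rw [div_le_one hd]
    have : 0 ≤ γ / (ℓ - 1) ^ 2 := by positivity
    have : 0 ≤ γ / (ℓ - 1) := by positivity
    linarith
  linarith

lemma key {γ ν₀ ℓ : ℝ} (hγ : 0 < γ) (hν : 1 < ν₀) (h : 1 + Real.sqrt γ < ℓ) :
    bP γ ℓ = (ℓ - 1) / (ℓ - 1 + γ) ∧
    aP γ ℓ - 1 / (ℓ * ν₀)
      = ((ℓ - 1) * ((1 + γ) * ν₀ - 1) + γ * (2 * ν₀ - 1)) / (ν₀ * ℓ * (ℓ - 1 + γ)) := by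
  have hs : 0 < Real.sqrt γ := Real.sqrt_pos.mpr hγ
  have hL0 : 0 < ℓ - 1 := by linarith
  have hℓ : 0 < ℓ := by linarith
  have hLγ : 0 < ℓ - 1 + γ := by linarith
  constructor
  · rw [bP, sP_sq hγ h, cP_sq hγ h]
    field_simp
    ring
  · rw [aP, sP_sq hγ h, cP_sq hγ h]
    field_simp
    ring

lemma denomPos {γ ν₀ ℓ : ℝ} (hγ : 0 < γ) (hν : 1 < ν₀) (hℓ : 1 < ℓ) :
    0 < (ℓ - 1) * ((1 + γ) * ν₀ - 1) + γ * (2 * ν₀ - 1) := by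
  have h1 : 0 < (ℓ - 1) * ((1 + γ) * ν₀ - 1) := mul_pos (by linarith) (by nlinarith)
  have h2 : 0 < γ * (2 * ν₀ - 1) := mul_pos hγ (by linarith)
  linarith

lemma identity {γ ν₀ ℓ : ℝ} (hγ : 0 < γ) (hν : 1 < ν₀) (h : 1 + Real.sqrt γ < ℓ) :
    ((ν₀ - bP γ ℓ) / (aP γ ℓ - 1 / (ℓ * ν₀))) / (ℓ * ν₀)
      = ((ℓ - 1) * (ν₀ - 1) + γ * ν₀)
          / ((ℓ - 1) * ((1 + γ) * ν₀ - 1) + γ * (2 * ν₀ - 1)) := by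
  have hs : 0 < Real.sqrt γ := Real.sqrt_pos.mpr hγ
  have hL0 : 0 < ℓ - 1 := by linarith
  have hℓ : 0 < ℓ := by linarith
  have hLγ : 0 < ℓ - 1 + γ := by linarith
  have hD : 0 < (ℓ - 1) * ((1 + γ) * ν₀ - 1) + γ * (2 * ν₀ - 1) :=
    denomPos hγ hν (by linarith)
  obtain ⟨hb, ha⟩ := key (ν₀ := ν₀) hγ hν h
  rw [hb, ha]
  have hν0 : (0:ℝ) < ν₀ := by linarith
  field_simp
  ring

/-- rational form of `η(ℓ,ν₀;γ)/(ℓν₀)` and strict monotonicity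
of `ℓ ↦ η(ℓ,ν₀;γ)/ℓ` under the stated conditions on `γ` and `ν₀`. -/
theorem stmt14 (γ ν₀ : ℝ) (hγ : 0 < γ) (hν : 1 < ν₀) :
    (∀ ℓ : ℝ, 1 + Real.sqrt γ < ℓ → aP γ ℓ - 1 / (ℓ * ν₀) ≠ 0 →
      ((ν₀ - bP γ ℓ) / (aP γ ℓ - 1 / (ℓ * ν₀))) / (ℓ * ν₀)
        = ((ℓ - 1) * (ν₀ - 1) + γ * ν₀)
            / ((ℓ - 1) * ((1 + γ) * ν₀ - 1) + γ * (2 * ν₀ - 1))) ∧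
    ((1 ≤ γ ∨ (γ < 1 ∧ ν₀ < 1 / (1 - Real.sqrt γ))) →
      StrictAntiOn
        (fun ℓ : ℝ => ((ℓ - 1) * (ν₀ - 1) + γ * ν₀)
            / ((ℓ - 1) * ((1 + γ) * ν₀ - 1) + γ * (2 * ν₀ - 1)))
        (Set.Ioi 1) ∧
      StrictAntiOn
        (fun ℓ : ℝ => ((ν₀ - bP γ ℓ) / (aP γ ℓ - 1 / (ℓ * ν₀))) / ℓ)
        (Set.Ioi (1 + Real.sqrt γ))) := by
  have hs : 0 < Real.sqrt γ := Real.sqrt_pos.mpr hγ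
  refine ⟨fun ℓ h _ => identity hγ hν h, fun hcond => ?_⟩
  -- key inequality: (ν₀-1)^2 < γ * ν₀^2
  have hkey : (ν₀ - 1) ^ 2 < γ * ν₀ ^ 2 := by
    have hsq := Real.sq_sqrt hγ.le
    rcases hcond with h1 | ⟨h1, h2⟩
    · have : 1 ≤ Real.sqrt γ := by
        nlinarith [Real.sqrt_nonneg γ]
      nlinarith
    · have hsl : Real.sqrt γ < 1 := by
        nlinarith [Real.sqrt_nonneg γ]
      have h3 : 0 < 1 - Real.sqrt γ := by linarith
      have h4 : ν₀ * (1 - Real.sqrt γ) < 1 := by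
        rw [lt_div_iff₀ h3] at h2; linarith
      nlinarith
  have hf : StrictAntiOn
      (fun ℓ : ℝ => ((ℓ - 1) * (ν₀ - 1) + γ * ν₀)
          / ((ℓ - 1) * ((1 + γ) * ν₀ - 1) + γ * (2 * ν₀ - 1))) (Set.Ioi 1) := by
    intro x hx y hy hxy
    simp only [Set.mem_Ioi] at hx hy
    have hdx := denomPos hγ hν hx
    have hdy := denomPos hγ hν hy
    simp only
    rw [div_lt_div_iff₀ hdy hdx]
    nlinarith [mul_pos (sub_pos.mpr hxy)
      (show (0:ℝ) < γ * (γ * ν₀ ^ 2 - (ν₀ - 1) ^ 2) from mul_pos hγ (by linarith))]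
  refine ⟨hf, ?_⟩
  intro x hx y hy hxy
  simp only [Set.mem_Ioi] at hx hy
  have hg : ∀ ℓ : ℝ, 1 + Real.sqrt γ < ℓ →
      ((ν₀ - bP γ ℓ) / (aP γ ℓ - 1 / (ℓ * ν₀))) / ℓ
        = ν₀ * (((ℓ - 1) * (ν₀ - 1) + γ * ν₀)
            / ((ℓ - 1) * ((1 + γ) * ν₀ - 1) + γ * (2 * ν₀ - 1))) := by
    intro ℓ h
    have hℓ : (0:ℝ) < ℓ := by linarith
    rw [← identity hγ hν h, show ℓ * ν₀ = ν₀ * ℓ from mul_comm _ _,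
      ← mul_div_assoc, mul_div_mul_left _ _ (show ν₀ ≠ 0 by linarith)]
  simp only
  rw [hg x hx, hg y hy]
  have hx1 : (1:ℝ) < x := by linarith
  have hy1 : (1:ℝ) < y := by linarith
  exact mul_lt_mul_of_pos_left (hf hx1 hy1 hxy) (by linarith)
end
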